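/- For each k ≥ 3, if there is a deterministic NOF protocol for Part_{n,k} of cost c, then c_{n,k} ≥ k^n / 2^c, i.e., the density Hales-Jewett number is at least the number of partitions divided by the number of leaves of the protocol. -/

import Mathlib

def IsPartitionTuple (n k : ℕ) (S : Fin k → Finset (Fin n)) : Prop :=
  (∀ i j, i ≠ j → Disjoint (S i) (S j)) ∧ ∀ x : Fin n, ∃ i, x ∈ S i

/-- The partition function `Part_{n,k}`, as a boolean function. -/
def PartF (n k : ℕ) (S : Fin k → Finset (Fin n)) : Bool :=
  decide ((∀ i j, i ≠ j → Disjoint (S i) (S j)) ∧ ∀ x : Fin n, ∃ i, x ∈ S i)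

def IsCombinatorialLine (n k : ℕ) (L : Set (Fin n → Fin k)) : Prop :=
  ∃ w : Fin n → Option (Fin k), (∃ x, w x = none) ∧
    L = Set.range fun j : Fin k => fun x : Fin n => (w x).getD j

/-- The density Hales-Jewett number `c_{n,k}`. -/
noncomputable def densityHJ (n k : ℕ) : ℕ :=
  sSup {m | ∃ A : Set (Fin n → Fin k),
    (¬ ∃ L, IsCombinatorialLine n k L ∧ L ⊆ A) ∧ Nat.card A = m}

inductive NOFProtocol {k : ℕ} (X : Fin k → Type*) : Type _ where
  | leaf : Bool → NOFProtocol X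
  | node : (i : Fin k) → (msg : (∀ j, X j) → Bool) →
      (∀ x y : ∀ j, X j, (∀ j, j ≠ i → x j = y j) → msg x = msg y) →
      (Bool → NOFProtocol X) → NOFProtocol X

def NOFProtocol.eval {k : ℕ} {X : Fin k → Type*} : NOFProtocol X → (∀ j, X j) → Bool
  | .leaf b, _ => b
  | .node _ msg _ next, x => (next (msg x)).eval x

def NOFProtocol.cost {k : ℕ} {X : Fin k → Type*} : NOFProtocol X → ℕ
  | .leaf _ => 0
  | .node _ _ _ next => 1 + max (next true).cost (next false).cost

def NOFProtocol.Computes {k : ℕ} {X : Fin k → Type*} (p : NOFProtocol X)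
    (f : (∀ j, X j) → Bool) : Prop :=
  ∀ x, p.eval x = f x

/-!
A protocol of cost `c` has at most `2 ^ c` transcripts. Read a point `x ∈ [k]^n` as the
partition of `[n]` into its colour classes, a `1`-input of `Part_{n,k}`. Suppose a
combinatorial line with wildcard set `W` lay inside one transcript class, and let `T` be the
tuple whose `i`-th part is the set of fixed coordinates of colour `i`. Off coordinate `j`, `T`
agrees with the point of the line with `W` coloured `j`, so player `j` cannot tell them apart,
and `T` gets the common transcript of the line. The protocol then outputs `1` on `T`, which
misses `W` and is not a partition. Hence `[k]^n` splits into `2 ^ c` line-free classes.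
-/

open Finset

namespace NOFProtocol

variable {k : ℕ} {X : Fin k → Type*}

def transcript : NOFProtocol X → (∀ j, X j) → List Bool
  | .leaf _, _ => []
  | .node _ msg _ next, x => msg x :: (next (msg x)).transcript x

theorem eval_eq_of_transcript_eq (p : NOFProtocol X) {x y : ∀ j, X j}
    (h : p.transcript x = p.transcript y) : p.eval x = p.eval y := by
  induction p with
  | leaf b => rfl
  | node i msg hmsg next ih =>
    obtain ⟨hxy, hnext⟩ := List.cons.inj h
    rw [hxy] at hnext
    simp only [eval, hxy]
    exact ih _ hnext

theorem card_image_transcript_le {α : Type*} (p : NOFProtocol X) (s : Finset α)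
    (f : α → ∀ j, X j) : #(s.image fun a => p.transcript (f a)) ≤ 2 ^ p.cost := by
  induction p with
  | leaf b =>
    calc #(s.image fun a => (leaf b).transcript (f a)) ≤ #{[]} :=
          card_le_card fun t => by simp +contextual [transcript]
      _ = 2 ^ (leaf b).cost := by simp [cost]
  | node i msg hmsg next ih =>
    let branch (b : Bool) := (s.image fun a => (next b).transcript (f a)).image (List.cons b)
    have hsub : s.image (fun a => (node i msg hmsg next).transcript (f a)) ⊆
        branch true ∪ branch false := by
      intro t ht
      obtain ⟨a, ha, rfl⟩ := mem_image.1 ht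
      cases hb : msg (f a) <;> simp [branch, transcript, hb] <;> exact ⟨a, ha, rfl⟩
    have hbranch (b : Bool) : #(branch b) ≤ 2 ^ max (next true).cost (next false).cost :=
      card_image_le.trans <| (ih b).trans <| Nat.pow_le_pow_right two_pos <| by
        cases b
        · exact le_max_right _ _
        · exact le_max_left _ _
    calc _ ≤ #(branch true ∪ branch false) := card_le_card hsub
      _ ≤ #(branch true) + #(branch false) := card_union_le _ _
      _ ≤ 2 ^ (node i msg hmsg next).cost := by
          rw [cost, pow_add]
          linarith [hbranch true, hbranch false]

theorem transcript_eq_of_star (p : NOFProtocol X) (S : Fin k → ∀ j, X j) (T : ∀ j, X j)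
    (hT : ∀ i j, j ≠ i → T j = S i j)
    (hS : ∀ i i', p.transcript (S i) = p.transcript (S i')) (i : Fin k) :
    p.transcript T = p.transcript (S i) := by
  induction p generalizing i with
  | leaf b => rfl
  | node i₀ msg hmsg next ih =>
    have hmsgS (i' : Fin k) : msg (S i') = msg (S i) := (List.cons.inj (hS i' i)).1
    have hmsgT : msg T = msg (S i) := (hmsg _ _ (hT i₀)).trans (hmsgS i₀)
    simp only [transcript, hmsgT]
    congr 1
    refine ih (msg (S i)) (fun i' i'' => ?_) i
    have := (List.cons.inj (hS i' i'')).2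
    rwa [hmsgS i', hmsgS i''] at this

end NOFProtocol

def LineFree (n k : ℕ) (A : Set (Fin n → Fin k)) : Prop :=
  ¬ ∃ L, IsCombinatorialLine n k L ∧ L ⊆ A

section Lines

variable {n k : ℕ}

theorem card_le_densityHJ (s : Finset (Fin n → Fin k)) (hs : LineFree n k s) :
    #s ≤ densityHJ n k := by
  refine le_csSup ⟨k ^ n, ?_⟩ ⟨s, hs, by simp⟩
  rintro m ⟨A, -, rfl⟩
  simpa using Nat.card_le_card_of_injective _ (Subtype.val_injective (p := (· ∈ A)))

def colorClasses (x : Fin n → Fin k) : Fin k → Finset (Fin n) :=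
  fun i => {a | x a = i}

theorem partF_colorClasses (x : Fin n → Fin k) : PartF n k (colorClasses x) = true := by
  refine decide_eq_true ⟨fun i j hij => disjoint_left.2 fun a hi hj => hij ?_, fun a => ⟨x a, ?_⟩⟩
  · simp only [colorClasses, mem_filter] at hi hj
    exact hi.2 ▸ hj.2
  · simp [colorClasses]

def linePoint (w : Fin n → Option (Fin k)) (j : Fin k) : Fin n → Fin k :=
  fun a => (w a).getD j

def lineCenter (w : Fin n → Option (Fin k)) : Fin k → Finset (Fin n) :=
  fun i => {a | w a = some i}

theorem colorClasses_linePoint_of_ne (w : Fin n → Option (Fin k)) {i j : Fin k}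
    (hij : i ≠ j) : colorClasses (linePoint w j) i = lineCenter w i := by
  ext a
  simp only [colorClasses, lineCenter, mem_filter, mem_univ, true_and]
  unfold linePoint
  cases w a <;> simp [hij.symm]

theorem partF_lineCenter (w : Fin n → Option (Fin k)) (hw : ∃ a, w a = none) :
    PartF n k (lineCenter w) = false := by
  obtain ⟨a, ha⟩ := hw
  refine decide_eq_false fun hpart => ?_
  obtain ⟨i, hi⟩ := hpart.2 a
  simp [lineCenter, ha] at hi

theorem lineFree_of_transcript_eq [NeZero k]
    {p : NOFProtocol (fun _ : Fin k => Finset (Fin n))} (hp : p.Computes (PartF n k))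
    {A : Set (Fin n → Fin k)}
    (hA : ∀ x ∈ A, ∀ y ∈ A, p.transcript (colorClasses x) = p.transcript (colorClasses y)) :
    LineFree n k A := by
  rintro ⟨L, ⟨w, hw, rfl⟩, hLA⟩
  have hpoint (j : Fin k) : linePoint w j ∈ A := hLA ⟨j, rfl⟩
  have hcenter := p.transcript_eq_of_star (fun j => colorClasses (linePoint w j)) (lineCenter w)
    (fun _ _ hij => (colorClasses_linePoint_of_ne w hij).symm)
    (fun j j' => hA _ (hpoint j) _ (hpoint j')) 0
  have heval := p.eval_eq_of_transcript_eq hcenter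
  rw [hp, hp, partF_lineCenter w hw, partF_colorClasses] at heval
  exact Bool.false_ne_true heval

end Lines

/-- For `k ≥ 3`: if there is a deterministic NOF protocol for `Part_{n,k}` of cost `c`,
then the density Hales-Jewett number satisfies `c_{n,k} ≥ k^n / 2^c`. -/
theorem densityHJ_lower_of_protocol (n k c : ℕ) (hk : 3 ≤ k)
    (p : NOFProtocol (fun _ : Fin k => Finset (Fin n)))
    (hp : p.Computes (PartF n k)) (hc : p.cost ≤ c) :
    (densityHJ n k : ℝ) ≥ (k : ℝ) ^ n / 2 ^ c := by
  have : NeZero k := ⟨by omega⟩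
  let code (x : Fin n → Fin k) : List Bool := p.transcript (colorClasses x)
  have hfiber (t : List Bool) : #{x | code x = t} ≤ densityHJ n k :=
    card_le_densityHJ _ <| lineFree_of_transcript_eq hp fun x hx y hy => by
      simp only [coe_filter, mem_univ, true_and, Set.mem_ofPred_eq] at hx hy
      exact hx.trans hy.symm
  have hcount : k ^ n ≤ densityHJ n k * 2 ^ c :=
    calc k ^ n = #(univ : Finset (Fin n → Fin k)) := by simp
      _ ≤ densityHJ n k * #(univ.image code) := card_le_mul_card_image _ _ fun t _ => hfiber t
      _ ≤ densityHJ n k * 2 ^ c := Nat.mul_le_mul_left _ <|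
          (p.card_image_transcript_le _ _).trans (Nat.pow_le_pow_right two_pos hc)
  rw [ge_iff_le, div_le_iff₀ (by positivity)]
  exact_mod_cast hcount
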